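/- Let 2 ≤ i < j ≤ m−1, let n = 2q+1 be odd with q ≥ 1, and suppose m ≥ 2j−1. Then α_j ≱_PS α_i; that is, there exists a profile of n preferences over m candidates at which the i-approval rule α_i is manipulable but the j-approval rule α_j is not manipulable. -/

import Mathlib

/-- A preference order on `m` candidates: `σ c` is the position of candidate `c`
(position `0` is the most preferred). `σ c < σ d` means `c` is strictly preferred to `d`. -/
abbrev Pref (m : ℕ) := Fin m ≃ Fin m

/-- A voting rule for `n` voters and `m` candidates. -/
abbrev Rule (m n : ℕ) := (Fin n → Pref m) → Fin m

/-- Total score of candidate `c` under score vector `s` (indexed by position) at profile `P`. -/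
def score {m n : ℕ} (s : Fin m → ℕ) (P : Fin n → Pref m) (c : Fin m) : ℕ :=
  ∑ v, s (P v c)

/-- The scoring rule with score vector `s`: the winner is the candidate that is first in the
lexicographic tie-breaking order (i.e. has the least index) among those of maximal score. -/
def winner {m n : ℕ} [NeZero m] (s : Fin m → ℕ) (P : Fin n → Pref m) : Fin m :=
  (Finset.univ.filter fun c => ∀ d, score s P d ≤ score s P c).min' (by
    obtain ⟨c, -, hc⟩ := Finset.exists_max_image Finset.univ (score s P) Finset.univ_nonempty
    exact ⟨c, Finset.mem_filter.mpr ⟨Finset.mem_univ c, fun d => hc d (Finset.mem_univ d)⟩⟩)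

/-- `k`-approval, `α_k`: one point for each of the top `k` positions. -/
def approval (m n k : ℕ) [NeZero m] : Rule m n :=
  winner (fun r => if (r : ℕ) < k then 1 else 0)

/-- `k`-Borda, `β_k`: `max (0, k - r + 1)` points for (`1`-indexed) position `r`, i.e. `k - r`
(truncated subtraction) points for `0`-indexed position `r`. -/
def kBorda (m n k : ℕ) [NeZero m] : Rule m n :=
  winner (fun r => k - (r : ℕ))

/-- `f` is manipulable at profile `P`: some voter `v` can misreport some preference `Q` and
obtain an outcome strictly preferred (by `v`'s true preferences) to the sincere outcome. -/
def Manipulable {m n : ℕ} (f : Rule m n) (P : Fin n → Pref m) : Prop :=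
  ∃ (v : Fin n) (Q : Pref m), P v (f (Function.update P v Q)) < P v (f P)

/-- `f ≥_PS g` : every profile at which `g` is manipulable is one at which `f` is manipulable. -/
def MoreManip {m n : ℕ} (f g : Rule m n) : Prop :=
  ∀ P : Fin n → Pref m, Manipulable g P → Manipulable f P

/-!
Take `q` voters of a type `A` that approves `1` under `α_i`, `q` voters of a type `B` that
approves `2` under `α_i`, and one voter with `2 ≻ 1` at the top. Both types rank `0` inside their
top `j` but outside their top `i`, and since `m ≥ 2j - 1` their top-`j` sets can be chosen to
share no candidate but `0`.

Under `α_i`, `1` and `2` tie at `q + 1` points and `1` wins the tie; the last voter demotes `1`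
below position `i` and `2` wins. Under `α_j`, `0` is approved by all `n` voters and every other
candidate by at most `n - 1`, so one voter can pull `0` down to a tie at best, and only with a
candidate she already approves; `0` wins every tie.
-/

open Equiv Fin.NatCast

theorem Fin.val_swap_apply {n : ℕ} (a b c : Fin n) :
    (swap a b c : ℕ) =
      if (c : ℕ) = a then (b : ℕ) else if (c : ℕ) = b then (a : ℕ) else c := by
  simp only [swap_apply_def, Fin.ext_iff]
  split_ifs <;> rfl

theorem Fin.val_one_of_two_le {n : ℕ} [NeZero n] (hn : 2 ≤ n) : ((1 : Fin n) : ℕ) = 1 := by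
  simp [Nat.mod_eq_of_lt (show 1 < n by omega)]

theorem Fin.val_two_of_three_le {n : ℕ} [NeZero n] (hn : 3 ≤ n) : ((2 : Fin n) : ℕ) = 2 := by
  simp [Nat.mod_eq_of_lt (show 2 < n by omega)]

section Scoring

variable {m n : ℕ} (s : Fin m → ℕ) (P : Fin n → Pref m)

theorem score_update_add (v : Fin n) (Q : Pref m) (c : Fin m) :
    score s (Function.update P v Q) c + s (P v c) = score s P c + s (Q c) := by
  simp only [score, Function.apply_update (fun _ (R : Pref m) => s (R c)),
    Finset.sum_update_of_mem (Finset.mem_univ v),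
    Finset.sum_eq_add_sum_sdiff_singleton_of_mem (Finset.mem_univ v) (fun u => s (P u c))]
  ring

variable [NeZero m]

theorem score_le_score_winner (d : Fin m) : score s P d ≤ score s P (winner s P) := by
  unfold winner
  exact (Finset.mem_filter.mp
    (Finset.min'_mem (Finset.univ.filter fun c => ∀ d, score s P d ≤ score s P c) _)).2 d

theorem winner_le_of_forall_score_le {w : Fin m} (hw : ∀ d, score s P d ≤ score s P w) :
    winner s P ≤ w :=
  Finset.min'_le _ _ (Finset.mem_filter.mpr ⟨Finset.mem_univ w, hw⟩)

theorem winner_eq_of_score_le_of_lt {w : Fin m} (hw : ∀ d, score s P d ≤ score s P w)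
    (hlt : ∀ d < w, score s P d < score s P w) : winner s P = w := by
  refine (winner_le_of_forall_score_le s P hw).antisymm (not_lt.mp fun h => ?_)
  exact (hlt _ h).not_ge (score_le_score_winner s P w)

end Scoring

def approvalVector (m k : ℕ) (r : Fin m) : ℕ := if (r : ℕ) < k then 1 else 0

theorem approval_eq_winner (m n k : ℕ) [NeZero m] :
    approval m n k = winner (approvalVector m k) := rfl

theorem approvalVector_le_one {m k : ℕ} (r : Fin m) : approvalVector m k r ≤ 1 := by
  unfold approvalVector
  split_ifs <;> omega

theorem score_approvalVector_lt {m n k : ℕ} {P : Fin n → Pref m} {c : Fin m} {v : Fin n}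
    (hv : k ≤ (P v c : ℕ)) : score (approvalVector m k) P c < n :=
  calc score (approvalVector m k) P c < ∑ _ : Fin n, 1 :=
        Finset.sum_lt_sum (fun u _ => approvalVector_le_one _)
          ⟨v, Finset.mem_univ v, by simp [approvalVector, hv]⟩
    _ = n := by simp

/-- A voter can lower `0` by at most one point and cannot raise a candidate she prefers to `0`,
since she already approves it; ties go to `0`. -/
theorem not_manipulable_approval {m n k : ℕ} [NeZero m] {P : Fin n → Pref m}
    (h0 : score (approvalVector m k) P 0 = n)
    (hlt : ∀ d ≠ 0, score (approvalVector m k) P d < n) :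
    ¬ Manipulable (approval m n k) P := by
  rintro ⟨v, Q, hv⟩
  have hwin : approval m n k P = 0 := by
    refine winner_eq_of_score_le_of_lt (approvalVector m k) P (fun d => ?_)
      fun d hd => absurd hd (Fin.not_lt_zero d)
    rcases eq_or_ne d 0 with rfl | hd
    exacts [le_rfl, by rw [h0]; exact (hlt d hd).le]
  obtain ⟨x, hx⟩ : ∃ x, approval m n k (Function.update P v Q) = x := ⟨_, rfl⟩
  rw [hwin, hx] at hv
  have hx0 : x ≠ 0 := fun h => (h ▸ hv).false
  have hv0 : (P v 0 : ℕ) < k := by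
    by_contra! h
    exact (score_approvalVector_lt h).ne h0
  have hx_lt : score (approvalVector m k) (Function.update P v Q) x < n := by
    have hvx : approvalVector m k (P v x) = 1 := if_pos ((Fin.lt_def.mp hv).trans hv0)
    have := score_update_add (approvalVector m k) P v Q x
    have := approvalVector_le_one (k := k) (Q x)
    have := hlt x hx0
    omega
  have h0_ge : n ≤ score (approvalVector m k) (Function.update P v Q) 0 + 1 := by
    have hv0' : approvalVector m k (P v 0) = 1 := if_pos hv0
    have := score_update_add (approvalVector m k) P v Q 0
    omega
  have hmax : ∀ d, score (approvalVector m k) (Function.update P v Q) d ≤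
      score (approvalVector m k) (Function.update P v Q) 0 := fun d => by
    have := score_le_score_winner (approvalVector m k) (Function.update P v Q) d
    rw [← approval_eq_winner, hx] at this
    omega
  exact hx0 (nonpos_iff_eq_zero.mp (hx ▸ winner_le_of_forall_score_le _ _ hmax))

section Profile

variable {m q : ℕ}

def profile (q : ℕ) (A B X : Pref m) : Fin (q + q + 1) → Pref m :=
  Fin.snoc (α := fun _ => Pref m) (Fin.append (fun _ : Fin q => A) fun _ : Fin q => B) X

theorem score_profile (s : Fin m → ℕ) (A B X : Pref m) (c : Fin m) :
    score s (profile q A B X) c = q * s (A c) + q * s (B c) + s (X c) := by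
  simp [score, profile, Fin.sum_univ_castSucc, Fin.sum_univ_add, -Fin.natAdd_eq_addNat]

theorem update_profile_last (A B X Y : Pref m) :
    Function.update (profile q A B X) (Fin.last _) Y = profile q A B Y :=
  Fin.update_snoc_last _ _ _

theorem profile_last (A B X : Pref m) : profile q A B X (Fin.last _) = X :=
  Fin.snoc_last _ _

theorem manipulable_approval_profile {i : ℕ} [NeZero m] (hm : 3 ≤ m) (hq : 1 ≤ q)
    {A B M Q : Pref m} (hAB : ∀ d, (A d : ℕ) < i → i ≤ (B d : ℕ))
    (hA0 : i ≤ (A 0 : ℕ)) (hB0 : i ≤ (B 0 : ℕ))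
    (hA1 : (A 1 : ℕ) < i) (hB2 : (B 2 : ℕ) < i)
    (hM : M 2 < M 1) (hM1 : (M 1 : ℕ) < i) (hQ2 : (Q 2 : ℕ) < i) (hQ1 : i ≤ (Q 1 : ℕ)) :
    Manipulable (approval m (q + q + 1) i) (profile q A B M) := by
  have h1 := Fin.val_one_of_two_le (show 2 ≤ m by omega)
  have h2 := Fin.val_two_of_three_le hm
  have hA2 : i ≤ (A 2 : ℕ) := by
    by_contra! h
    exact (hAB 2 h).not_gt hB2
  have hB1 := hAB 1 hA1
  have hbound : ∀ X d, score (approvalVector m i) (profile q A B X) d ≤ q + 1 := by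
    intro X d
    have := hAB d
    simp only [score_profile, approvalVector]
    split_ifs <;> omega
  have hsincere : approval m _ i (profile q A B M) = 1 := by
    rw [approval_eq_winner]
    refine winner_eq_of_score_le_of_lt _ _ (fun d => (hbound M d).trans ?_) fun d hd => ?_
    · simp only [score_profile, approvalVector]
      split_ifs <;> omega
    · rw [Fin.lt_def, h1] at hd
      obtain rfl : d = 0 := Fin.ext (by rw [Fin.val_zero]; omega)
      simp only [score_profile, approvalVector]
      split_ifs <;> omega
  have hinsincere : approval m _ i (profile q A B Q) = 2 := by
    rw [approval_eq_winner]
    refine winner_eq_of_score_le_of_lt _ _ (fun d => (hbound Q d).trans ?_) fun d hd => ?_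
    · simp only [score_profile, approvalVector]
      split_ifs <;> omega
    · rw [Fin.lt_def, h2] at hd
      obtain rfl | rfl : d = 0 ∨ d = 1 := by
        rcases (by omega : (d : ℕ) = 0 ∨ (d : ℕ) = 1) with h | h
        exacts [.inl (Fin.ext (by rw [h, Fin.val_zero])), .inr (Fin.ext (h.trans h1.symm))]
      all_goals simp only [score_profile, approvalVector]; split_ifs <;> omega
  refine ⟨Fin.last _, Q, ?_⟩
  rwa [update_profile_last, hsincere, hinsincere, profile_last]

end Profile

def prefA (m i j : ℕ) [NeZero m] : Pref m := (swap 2 (j : Fin m)).trans (swap 0 (i : Fin m))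

def prefB (m j : ℕ) [NeZero m] : Pref m :=
  (swap 2 ((m + 1 - j : ℕ) : Fin m)).trans (Equiv.addRight ((j - 1 : ℕ) : Fin m))

section Preferences

variable {m : ℕ} [NeZero m]

theorem val_prefA {i j : ℕ} (hi : 2 ≤ i) (hij : i < j) (hjm : j < m) (d : Fin m) :
    (prefA m i j d : ℕ) = if (d : ℕ) = 0 then i else if (d : ℕ) = 2 then j else
      if (d : ℕ) = j then (if i = 2 then 0 else 2) else if (d : ℕ) = i then 0 else d := by
  simp only [prefA, trans_apply, Fin.val_swap_apply, Fin.val_cast_of_lt hjm,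
    Fin.val_cast_of_lt (hij.trans hjm), Fin.val_two_of_three_le (show 3 ≤ m by omega),
    Fin.val_zero]
  grind

theorem val_prefB {j : ℕ} (hj : 3 ≤ j) (hm : 2 * j - 1 ≤ m) (d : Fin m) :
    (prefB m j d : ℕ) = if (d : ℕ) = 2 then 0 else if (d : ℕ) = m + 1 - j then j + 1 else
      if (d : ℕ) + j - 1 < m then d + j - 1 else d + j - 1 - m := by
  have := d.2
  simp only [prefB, trans_apply, coe_addRight, Fin.val_add_eq_ite, Fin.val_swap_apply,
    Fin.val_two_of_three_le (show 3 ≤ m by omega),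
    Fin.val_cast_of_lt (show m + 1 - j < m by omega), Fin.val_cast_of_lt (show j - 1 < m by omega)]
  split_ifs <;> omega

theorem prefA_lt_iff {i j : ℕ} (hi : 2 ≤ i) (hij : i < j) (hjm : j < m) (d : Fin m) :
    (prefA m i j d : ℕ) < j ↔ (d : ℕ) ≤ j ∧ (d : ℕ) ≠ 2 := by
  rw [val_prefA hi hij hjm]
  split_ifs <;> omega

theorem prefB_lt_iff {j : ℕ} (hj : 3 ≤ j) (hm : 2 * j - 1 ≤ m) (d : Fin m) :
    (prefB m j d : ℕ) < j ↔ (d : ℕ) = 0 ∨ (d : ℕ) = 2 ∨ m + 2 - j ≤ (d : ℕ) := by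
  have := d.2
  rw [val_prefB hj hm]
  split_ifs <;> omega

theorem prefA_zero {i j : ℕ} (hi : 2 ≤ i) (hij : i < j) (hjm : j < m) :
    (prefA m i j 0 : ℕ) = i := by
  rw [val_prefA hi hij hjm, Fin.val_zero]
  grind

theorem prefA_one {i j : ℕ} (hi : 2 ≤ i) (hij : i < j) (hjm : j < m) :
    (prefA m i j 1 : ℕ) = 1 := by
  rw [val_prefA hi hij hjm, Fin.val_one_of_two_le (show 2 ≤ m by omega)]
  grind

theorem prefB_zero {j : ℕ} (hj : 3 ≤ j) (hm : 2 * j - 1 ≤ m) :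
    (prefB m j 0 : ℕ) = j - 1 := by
  rw [val_prefB hj hm, Fin.val_zero]
  grind

theorem prefB_two {j : ℕ} (hj : 3 ≤ j) (hm : 2 * j - 1 ≤ m) : (prefB m j 2 : ℕ) = 0 := by
  rw [val_prefB hj hm, Fin.val_two_of_three_le (show 3 ≤ m by omega)]
  grind

theorem eq_zero_of_prefA_lt_of_prefB_lt {i j : ℕ} (hi : 2 ≤ i) (hij : i < j)
    (hm : 2 * j - 1 ≤ m) {d : Fin m} (hA : (prefA m i j d : ℕ) < j)
    (hB : (prefB m j d : ℕ) < j) : d = 0 := by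
  rw [prefA_lt_iff hi hij (by omega)] at hA
  rw [prefB_lt_iff (by omega) hm] at hB
  exact Fin.ext (by rw [Fin.val_zero]; omega)

theorem le_prefB_of_prefA_lt {i j : ℕ} (hi : 2 ≤ i) (hij : i < j) (hm : 2 * j - 1 ≤ m)
    (d : Fin m) (hA : (prefA m i j d : ℕ) < i) : i ≤ (prefB m j d : ℕ) := by
  by_contra! hB
  have hd := eq_zero_of_prefA_lt_of_prefB_lt hi hij hm (hA.trans hij) (hB.trans hij)
  rw [hd, prefA_zero hi hij (by omega)] at hA
  exact hA.false

end Preferences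

theorem stmt_2_general (m n q i j : ℕ) [NeZero m] (hi : 2 ≤ i) (hij : i < j)
    (hq : 1 ≤ q) (hn : n = 2 * q + 1) (hm : 2 * j - 1 ≤ m) :
    ∃ P : Fin n → Pref m,
      Manipulable (approval m n i) P ∧ ¬ Manipulable (approval m n j) P := by
  obtain rfl : n = q + q + 1 := by omega
  have hjm : j < m := by omega
  have h1 := Fin.val_one_of_two_le (show 2 ≤ m by omega)
  have h2 := Fin.val_two_of_three_le (show 3 ≤ m by omega)
  have hA0 := prefA_zero hi hij hjm
  have hB0 := prefB_zero (show 3 ≤ j by omega) hm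
  refine ⟨profile q (prefA m i j) (prefB m j) (swap 0 2), ?_, ?_⟩
  · refine manipulable_approval_profile (Q := (swap 0 2).trans (swap 1 (i : Fin m))) (by omega) hq
      (le_prefB_of_prefA_lt hi hij hm) hA0.ge (by omega) (by rw [prefA_one hi hij hjm]; omega)
      (by rw [prefB_two (by omega) hm]; omega) ?_ ?_ ?_ ?_
    all_goals
      simp only [Fin.lt_def, trans_apply, Fin.val_swap_apply, h1, h2, Fin.val_zero,
        Fin.val_cast_of_lt (hij.trans hjm)]
      grind
  · refine not_manipulable_approval ?_ fun d hd => ?_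
    · simp only [score_profile, approvalVector, Fin.val_swap_apply, h2, Fin.val_zero]
      grind
    · have : ¬((prefA m i j d : ℕ) < j ∧ (prefB m j d : ℕ) < j) := fun h =>
        hd (eq_zero_of_prefA_lt_of_prefB_lt hi hij hm h.1 h.2)
      simp only [score_profile, approvalVector]
      split_ifs <;> omega

/-- For `2 ≤ i < j ≤ m-1`, `n = 2q+1` odd with `q ≥ 1`, and `m ≥ 2j-1`: `α_j ≱_PS α_i`. -/
theorem stmt_2 (m n q i j : ℕ) [NeZero m] (hi : 2 ≤ i) (hij : i < j) (hj : j ≤ m - 1)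
    (hq : 1 ≤ q) (hn : n = 2 * q + 1) (hm : 2 * j - 1 ≤ m) :
    ∃ P : Fin n → Pref m,
      Manipulable (approval m n i) P ∧ ¬ Manipulable (approval m n j) P :=
  stmt_2_general m n q i j hi hij hq hn hm
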